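/- arXiv:2106.01171 — 6 statements merged into one kernel-verified Lean document; each statement's English description precedes it below -/
import Mathlib

section
/- Every punctuated homotopy is a strong homotopy: if H : X × {0,1,…,k} → Y is a homotopy such that for each 0 ≤ t < k there is a point x_t ∈ X with H(x,t) = H(x,t+1) for all x ≠ x_t, then H(x,t) ⟷= H(x',t') whenever x ⟷= x', |t−t'| ≤ 1, and (x,t) ≠ (x',t'). -/
/-- A function between digital images (simple graphs) is digitally continuous if
adjacent points map to adjacent-or-equal points. -/
def DigCont {X Y : Type*} (GX : SimpleGraph X) (GY : SimpleGraph Y) (f : X → Y) : Prop :=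
  ∀ x x', GX.Adj x x' → (GY.Adj (f x) (f x') ∨ f x = f x')

/-- `H : X × {0,…,k} → Y` is a (digital) homotopy of length `k` from `f` to `g`. -/
def IsHomotopy {X Y : Type*} (GX : SimpleGraph X) (GY : SimpleGraph Y)
    (f g : X → Y) (k : ℕ) (H : X → ℕ → Y) : Prop :=
  (∀ x, H x 0 = f x) ∧ (∀ x, H x k = g x) ∧
  (∀ t ≤ k, DigCont GX GY fun x => H x t) ∧
  (∀ x, ∀ t < k, GY.Adj (H x t) (H x (t + 1)) ∨ H x t = H x (t + 1))

/-- `H` is continuous with respect to the `NP₂` normal product adjacency on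
`X × {0,…,k}`: whenever `x ⟷= x'`, `|t - t'| ≤ 1` and `(x,t) ≠ (x',t')`, the
values `H x t` and `H x' t'` are adjacent or equal. -/
def NP2Cont {X Y : Type*} (GX : SimpleGraph X) (GY : SimpleGraph Y)
    (k : ℕ) (H : X → ℕ → Y) : Prop :=
  ∀ x x' t t', (GX.Adj x x' ∨ x = x') → t ≤ k → t' ≤ k →
    t ≤ t' + 1 → t' ≤ t + 1 → (x, t) ≠ (x', t') →
    (GY.Adj (H x t) (H x' t') ∨ H x t = H x' t')

/-- A strong homotopy of length `k` from `f` to `g`. -/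
def IsStrongHomotopy {X Y : Type*} (GX : SimpleGraph X) (GY : SimpleGraph Y)
    (f g : X → Y) (k : ℕ) (H : X → ℕ → Y) : Prop :=
  IsHomotopy GX GY f g k H ∧ NP2Cont GX GY k H

/-- `f` and `g` are strongly homotopic. -/
def StronglyHomotopic {X Y : Type*} (GX : SimpleGraph X) (GY : SimpleGraph Y)
    (f g : X → Y) : Prop :=
  ∃ k H, IsStrongHomotopy GX GY f g k H

/-- A homotopy of length `k` is punctuated if from each stage to the next it
changes the value at no more than one point. -/
def Punctuated {X Y : Type*} (k : ℕ) (H : X → ℕ → Y) : Prop :=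
  ∀ t < k, ∃ x₀ : X, ∀ x ≠ x₀, H x t = H x (t + 1)

/-- At most one of the adjacent points `x, x'` is `x₀`, so at that point `u` and `v`
may be exchanged and the claim becomes the continuity of `u` or of `v`. -/
theorem DigCont.adj_or_eq_of_eqOn_compl_singleton {X Y : Type*} {GX : SimpleGraph X}
    {GY : SimpleGraph Y} {u v : X → Y} (hu : DigCont GX GY u) (hv : DigCont GX GY v)
    {x₀ : X} (huv : ∀ x ≠ x₀, u x = v x) {x x' : X} (hxx' : GX.Adj x x') :
    GY.Adj (u x) (v x') ∨ u x = v x' := by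
  by_cases hx : x = x₀
  · have hx' : x' ≠ x₀ := fun h => GX.ne_of_adj hxx' (hx.trans h.symm)
    rw [← huv x' hx']
    exact hu x x' hxx'
  · rw [huv x hx]
    exact hv x x' hxx'

/-- every punctuated homotopy is a strong homotopy. -/
theorem punctuated_is_strong {X Y : Type*} (GX : SimpleGraph X) (GY : SimpleGraph Y)
    (f g : X → Y) (k : ℕ) (H : X → ℕ → Y)
    (hH : IsHomotopy GX GY f g k H) (hP : Punctuated k H) :
    NP2Cont GX GY k H := by
  obtain ⟨-, -, hcont, hstep⟩ := hH
  intro x x' t t' hxx' ht ht' htt' ht't hne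
  wlog hle : t ≤ t' generalizing x x' t t'
  · exact (this x' x t' t (hxx'.imp SimpleGraph.Adj.symm Eq.symm) ht' ht ht't htt' hne.symm
      (by omega)).imp SimpleGraph.Adj.symm Eq.symm
  obtain rfl | rfl : t = t' ∨ t' = t + 1 := by omega
  · rcases hxx' with hadj | rfl
    · exact hcont t ht x x' hadj
    · exact absurd rfl hne
  · obtain ⟨x₀, hx₀⟩ := hP t ht'
    rcases hxx' with hadj | rfl
    · exact (hcont t ht).adj_or_eq_of_eqOn_compl_singleton (hcont (t + 1) ht') hx₀ hadj
    · exact hstep x t ht'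
end

section
/- Let X be a finite digital image and let f, g : X → Y be continuous maps that are strongly homotopic. Then there is a punctuated homotopy from f to g. -/
/-!
Consecutive stages `F = H · t` and `G = H · (t + 1)` of a strong homotopy satisfy
`F x ⟷= G x'` whenever `x ⟷= x'`. Hence every map that agrees with `G` on some set of points
and with `F` elsewhere is continuous, so moving the finitely many points of `X` from `F` to `G`
one at a time is a punctuated homotopy. Concatenating these over all `t` gives the theorem.
-/

def PunctuatedHomotopic {X Y : Type*} (GX : SimpleGraph X) (GY : SimpleGraph Y)
    (f g : X → Y) : Prop :=
  ∃ k H, IsHomotopy GX GY f g k H ∧ Punctuated k H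

def concatHomotopy {X Y : Type*} (k₁ : ℕ) (H₁ H₂ : X → ℕ → Y) : X → ℕ → Y :=
  fun x s => if s ≤ k₁ then H₁ x s else H₂ x (s - k₁)

section Concat

variable {X Y : Type*} {GX : SimpleGraph X} {GY : SimpleGraph Y} {f g h : X → Y}
  {k₁ k₂ : ℕ} {H₁ H₂ : X → ℕ → Y}

lemma concatHomotopy_of_le {s : ℕ} (hs : s ≤ k₁) (x : X) :
    concatHomotopy k₁ H₁ H₂ x s = H₁ x s :=
  if_pos hs

lemma concatHomotopy_of_ge (hglue : ∀ x, H₁ x k₁ = H₂ x 0) {s : ℕ} (hs : k₁ ≤ s) (x : X) :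
    concatHomotopy k₁ H₁ H₂ x s = H₂ x (s - k₁) := by
  unfold concatHomotopy
  split_ifs with h
  · obtain rfl : s = k₁ := le_antisymm h hs
    rw [Nat.sub_self, hglue]
  · rfl

lemma IsHomotopy.concat (h₁ : IsHomotopy GX GY f g k₁ H₁) (h₂ : IsHomotopy GX GY g h k₂ H₂) :
    IsHomotopy GX GY f h (k₁ + k₂) (concatHomotopy k₁ H₁ H₂) := by
  obtain ⟨h₁0, h₁k, h₁cont, h₁step⟩ := h₁
  obtain ⟨h₂0, h₂k, h₂cont, h₂step⟩ := h₂
  have hglue x : H₁ x k₁ = H₂ x 0 := (h₁k x).trans (h₂0 x).symm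
  refine ⟨fun x => ?_, fun x => ?_, fun s hs => ?_, fun x s hs => ?_⟩
  · rw [concatHomotopy_of_le k₁.zero_le, h₁0]
  · rw [concatHomotopy_of_ge hglue (k₁.le_add_right k₂), Nat.add_sub_cancel_left, h₂k]
  · rcases le_total s k₁ with hs₁ | hs₁
    · simpa only [concatHomotopy_of_le hs₁] using h₁cont s hs₁
    · simpa only [concatHomotopy_of_ge hglue hs₁] using h₂cont (s - k₁) (by omega)
  · rcases lt_or_ge s k₁ with hs₁ | hs₁
    · rw [concatHomotopy_of_le hs₁.le, concatHomotopy_of_le hs₁]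
      exact h₁step x s hs₁
    · rw [concatHomotopy_of_ge hglue hs₁, concatHomotopy_of_ge hglue (by omega),
        Nat.sub_add_comm hs₁]
      exact h₂step x (s - k₁) (by omega)

lemma Punctuated.concat (hglue : ∀ x, H₁ x k₁ = H₂ x 0) (p₁ : Punctuated k₁ H₁)
    (p₂ : Punctuated k₂ H₂) : Punctuated (k₁ + k₂) (concatHomotopy k₁ H₁ H₂) := by
  intro s hs
  rcases lt_or_ge s k₁ with hs₁ | hs₁
  · obtain ⟨x₀, hx₀⟩ := p₁ s hs₁
    refine ⟨x₀, fun x hx => ?_⟩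
    rw [concatHomotopy_of_le hs₁.le, concatHomotopy_of_le hs₁]
    exact hx₀ x hx
  · obtain ⟨x₀, hx₀⟩ := p₂ (s - k₁) (by omega)
    refine ⟨x₀, fun x hx => ?_⟩
    rw [concatHomotopy_of_ge hglue hs₁, concatHomotopy_of_ge hglue (by omega),
      Nat.sub_add_comm hs₁]
    exact hx₀ x hx

end Concat

namespace PunctuatedHomotopic

variable {X Y : Type*} {GX : SimpleGraph X} {GY : SimpleGraph Y} {f g h : X → Y}

lemma refl (hf : DigCont GX GY f) : PunctuatedHomotopic GX GY f f :=
  ⟨0, fun x _ => f x,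
    ⟨fun _ => rfl, fun _ => rfl, fun _ _ => hf, fun _ _ ht => absurd ht (Nat.not_lt_zero _)⟩,
    fun _ ht => absurd ht (Nat.not_lt_zero _)⟩

lemma trans (hfg : PunctuatedHomotopic GX GY f g) (hgh : PunctuatedHomotopic GX GY g h) :
    PunctuatedHomotopic GX GY f h := by
  obtain ⟨k₁, H₁, h₁, p₁⟩ := hfg
  obtain ⟨k₂, H₂, h₂, p₂⟩ := hgh
  exact ⟨k₁ + k₂, concatHomotopy k₁ H₁ H₂, h₁.concat h₂,
    p₁.concat (fun x => (h₁.2.1 x).trans (h₂.1 x).symm) p₂⟩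

end PunctuatedHomotopic

section OneStep

variable {X Y : Type*} {GX : SimpleGraph X} {GY : SimpleGraph Y} {f g : X → Y}

lemma digCont_piecewise (hf : DigCont GX GY f) (hg : DigCont GX GY g)
    (hfg : ∀ x x', GX.Adj x x' → GY.Adj (f x) (g x') ∨ f x = g x')
    (s : Set X) [DecidablePred (· ∈ s)] : DigCont GX GY (s.piecewise g f) := by
  intro x x' hxx'
  by_cases hx : x ∈ s <;> by_cases hx' : x' ∈ s <;>
    simp only [Set.piecewise_eq_of_mem, Set.piecewise_eq_of_notMem, hx, hx', not_false_eq_true]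
  · exact hg x x' hxx'
  · rcases hfg x' x hxx'.symm with hadj | heq
    · exact Or.inl hadj.symm
    · exact Or.inr heq.symm
  · exact hfg x x' hxx'
  · exact hf x x' hxx'

theorem punctuatedHomotopic_of_forall_adj_or_eq [Finite X] (hf : DigCont GX GY f)
    (hg : DigCont GX GY g)
    (hfg : ∀ x x', (GX.Adj x x' ∨ x = x') → GY.Adj (f x) (g x') ∨ f x = g x') :
    PunctuatedHomotopic GX GY f g := by
  classical
  let e := Finite.equivFin X
  refine ⟨Nat.card X, fun x j => {x | e x < j}.piecewise g f x, ⟨fun x => ?_, fun x => ?_,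
    fun j _ => digCont_piecewise hf hg (fun x x' h => hfg x x' (Or.inl h)) _, fun x j _ => ?_⟩,
    fun j hj => ⟨e.symm ⟨j, hj⟩, fun x hx => ?_⟩⟩
  · simp [Set.piecewise]
  · simp [Set.piecewise]
  · by_cases hxj : (e x : ℕ) = j
    · simpa [Set.piecewise, hxj] using hfg x x (Or.inr rfl)
    · have hle : (e x : ℕ) ≤ j ↔ (e x : ℕ) < j := by omega
      simp [Set.piecewise, hle]
  · have hxj : (e x : ℕ) ≠ j := fun hxj => hx (e.symm_apply_eq.mpr (Fin.ext hxj.symm)).symm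
    have hle : (e x : ℕ) ≤ j ↔ (e x : ℕ) < j := by omega
    simp [Set.piecewise, hle]

end OneStep

lemma NP2Cont.adj_or_eq_succ {X Y : Type*} {GX : SimpleGraph X} {GY : SimpleGraph Y} {k : ℕ}
    {H : X → ℕ → Y} (hH : NP2Cont GX GY k H) {t : ℕ} (ht : t < k) (x x' : X)
    (hxx' : GX.Adj x x' ∨ x = x') : GY.Adj (H x t) (H x' (t + 1)) ∨ H x t = H x' (t + 1) :=
  hH x x' t (t + 1) hxx' ht.le ht (by omega) (by omega) (by simp)

theorem punctuated_of_stronglyHomotopic_general {X Y : Type*} [Finite X]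
    (GX : SimpleGraph X) (GY : SimpleGraph Y)
    (f g : X → Y)
    (h : StronglyHomotopic GX GY f g) :
    ∃ k H, IsHomotopy GX GY f g k H ∧ Punctuated k H := by
  obtain ⟨k, H, ⟨h0, hk, hcont, -⟩, hnp⟩ := h
  obtain rfl : f = fun x => H x 0 := funext fun x => (h0 x).symm
  obtain rfl : g = fun x => H x k := funext fun x => (hk x).symm
  have hstages : ∀ n ≤ k, PunctuatedHomotopic GX GY (fun x => H x 0) fun x => H x n := by
    intro n
    induction n with
    | zero => exact fun _ => .refl (hcont 0 k.zero_le)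
    | succ n ih =>
      intro hn
      exact (ih (by omega)).trans <| punctuatedHomotopic_of_forall_adj_or_eq
        (hcont n (by omega)) (hcont (n + 1) hn) (hnp.adj_or_eq_succ hn)
  exact hstages k le_rfl

/-- Theorem `punctuatedthm`: if `X` is finite and `f, g : X → Y`
are continuous and strongly homotopic, then there is a punctuated homotopy from
`f` to `g`. -/
theorem punctuated_of_stronglyHomotopic {X Y : Type*} [Finite X]
    (GX : SimpleGraph X) (GY : SimpleGraph Y)
    (f g : X → Y) (hf : DigCont GX GY f) (hg : DigCont GX GY g)
    (h : StronglyHomotopic GX GY f g) :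
    ∃ k H, IsHomotopy GX GY f g k H ∧ Punctuated k H :=
  punctuated_of_stronglyHomotopic_general GX GY f g h
end

section
/- Let X be a finite digital image and Y a digital image. Two continuous maps f, g : X → Y are strongly homotopic if and only if there is a punctuated homotopy from f to g. -/
/-!
A punctuated homotopy is strong: at each step only one point `x₀` moves, so for `x ⟷= x'`
one of `H x t`, `H x' (t+1)` can be replaced by its value at the other time, reducing the
diagonal condition to continuity in `x` at a fixed time or to the step condition at `x₀`.

Conversely, enumerate the finite image as `x₀, …, x_{n-1}` and split each step `t → t+1`
of a strong homotopy into `n` steps, the `i`-th of which moves only `xᵢ`. The intermediate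
maps take values `H x t` or `H x (t+1)`, and strong continuity is exactly what makes them
continuous.
-/

section StaggeredTime

/-- Clock of the point of index `i < n` after `s` steps of the schedule that, at step `s`,
advances only the point of index `s % n`. -/
def staggeredTime (n i s : ℕ) : ℕ :=
  s / n + if i < s % n then 1 else 0

variable {n i : ℕ}

@[simp]
lemma staggeredTime_zero : staggeredTime n i 0 = 0 := by
  simp [staggeredTime]

lemma staggeredTime_mul_self (hn : 0 < n) (k : ℕ) : staggeredTime n i (k * n) = k := by
  simp [staggeredTime, Nat.mul_div_cancel _ hn]

lemma staggeredTime_le_add_one (j s : ℕ) : staggeredTime n i s ≤ staggeredTime n j s + 1 := by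
  unfold staggeredTime
  split_ifs <;> omega

lemma staggeredTime_succ (hi : i < n) (s : ℕ) :
    staggeredTime n i (s + 1) = staggeredTime n i s + if i = s % n then 1 else 0 := by
  have hn : 0 < n := by omega
  have hdiv := Nat.mod_add_div s n
  have hmod := Nat.mod_lt s hn
  unfold staggeredTime
  rcases (s % n + 1).lt_or_ge n with hlt | hge
  · obtain ⟨hq, hr⟩ := (Nat.div_mod_unique hn).2
      ⟨(by omega : s % n + 1 + n * (s / n) = s + 1), hlt⟩
    rw [hq, hr]
    split_ifs <;> omega
  · obtain ⟨hq, hr⟩ := (Nat.div_mod_unique hn).2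
      ⟨(by rw [Nat.mul_succ]; omega : 0 + n * (s / n + 1) = s + 1), hn⟩
    rw [hq, hr]
    split_ifs <;> omega

lemma staggeredTime_succ_of_ne (hi : i < n) {s : ℕ} (hs : i ≠ s % n) :
    staggeredTime n i (s + 1) = staggeredTime n i s := by
  simp [staggeredTime_succ hi, hs]

lemma staggeredTime_succ_le (hi : i < n) (s : ℕ) :
    staggeredTime n i (s + 1) ≤ staggeredTime n i s + 1 := by
  rw [staggeredTime_succ hi]
  split_ifs <;> omega

lemma staggeredTime_monotone (hi : i < n) : Monotone (staggeredTime n i) :=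
  monotone_nat_of_le_succ fun s => by rw [staggeredTime_succ hi]; omega

end StaggeredTime

section DigitalHomotopy

variable {X Y : Type*} {GX : SimpleGraph X} {GY : SimpleGraph Y} {f g : X → Y} {k : ℕ}
  {H : X → ℕ → Y}

lemma NP2Cont.adj_or_eq (hH : NP2Cont GX GY k H) {x x' : X} {t t' : ℕ}
    (hx : GX.Adj x x' ∨ x = x') (ht : t ≤ k) (ht' : t' ≤ k)
    (h₁ : t ≤ t' + 1) (h₂ : t' ≤ t + 1) :
    GY.Adj (H x t) (H x' t') ∨ H x t = H x' t' := by
  by_cases heq : (x, t) = (x', t')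
  · obtain ⟨rfl, rfl⟩ := Prod.ext_iff.1 heq
    exact Or.inr rfl
  · exact hH x x' t t' hx ht ht' h₁ h₂ heq

lemma IsStrongHomotopy.isHomotopy_reparam (hH : IsStrongHomotopy GX GY f g k H)
    {m : ℕ} {T : X → ℕ → ℕ} (hT₀ : ∀ x, T x 0 = 0) (hTm : ∀ x, T x m = k)
    (hT_mono : ∀ x, Monotone (T x)) (hT_succ : ∀ x s, T x (s + 1) ≤ T x s + 1)
    (hT_near : ∀ x x' s, T x s ≤ T x' s + 1) :
    IsHomotopy GX GY f g m fun x s => H x (T x s) := by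
  obtain ⟨⟨hH₀, hHk, -, -⟩, hNP⟩ := hH
  have hT_le : ∀ x s, s ≤ m → T x s ≤ k := fun x s hs => hTm x ▸ hT_mono x hs
  refine ⟨fun x => by simp only [hT₀, hH₀], fun x => by simp only [hTm, hHk], ?_, ?_⟩
  · intro s hs x x' hadj
    exact hNP.adj_or_eq (Or.inl hadj) (hT_le x s hs) (hT_le x' s hs)
      (hT_near x x' s) (hT_near x' x s)
  · intro x s hs
    exact hNP.adj_or_eq (Or.inr rfl) (hT_le x s hs.le) (hT_le x (s + 1) hs)
      ((hT_mono x s.le_succ).trans (Nat.le_succ _)) (hT_succ x s)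

lemma IsHomotopy.adj_or_eq_succ_of_punctuated (hH : IsHomotopy GX GY f g k H)
    (hP : Punctuated k H) {x x' : X} (hx : GX.Adj x x' ∨ x = x') {t : ℕ} (ht : t < k) :
    GY.Adj (H x t) (H x' (t + 1)) ∨ H x t = H x' (t + 1) := by
  obtain ⟨-, -, hcont, hstep⟩ := hH
  obtain ⟨x₀, hx₀⟩ := hP t ht
  by_cases hx' : x' = x₀
  · subst hx'
    rcases hx with hadj | rfl
    · rw [hx₀ x hadj.ne]
      exact hcont (t + 1) ht x x' hadj
    · exact hstep x t ht
  · rw [← hx₀ x' hx']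
    rcases hx with hadj | rfl
    · exact hcont t ht.le x x' hadj
    · exact Or.inr rfl

lemma IsHomotopy.np2Cont_of_punctuated (hH : IsHomotopy GX GY f g k H) (hP : Punctuated k H) :
    NP2Cont GX GY k H := by
  have hcont := hH.2.2.1
  intro x x' t t' hx ht ht' h₁ h₂ hne
  rcases Nat.lt_trichotomy t t' with hlt | rfl | hgt
  · obtain rfl : t' = t + 1 := by omega
    exact hH.adj_or_eq_succ_of_punctuated hP hx (by omega)
  · rcases hx with hadj | rfl
    · exact hcont t ht x x' hadj
    · exact absurd rfl hne
  · obtain rfl : t = t' + 1 := by omega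
    exact (hH.adj_or_eq_succ_of_punctuated hP (hx.imp (·.symm) (·.symm)) (by omega)).imp
      (·.symm) (·.symm)

lemma StronglyHomotopic.exists_punctuated [Finite X] (h : StronglyHomotopic GX GY f g) :
    ∃ m H', IsHomotopy GX GY f g m H' ∧ Punctuated m H' := by
  obtain ⟨k, H, hH⟩ := h
  obtain ⟨n, ⟨e⟩⟩ := Finite.exists_equiv_fin X
  let T : X → ℕ → ℕ := fun x => staggeredTime n (e x)
  refine ⟨k * n, fun x s => H x (T x s), ?_, ?_⟩
  · exact hH.isHomotopy_reparam (fun x => staggeredTime_zero)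
      (fun x => staggeredTime_mul_self (Fin.pos (e x)) k)
      (fun x => staggeredTime_monotone (e x).2) (fun x => staggeredTime_succ_le (e x).2)
      (fun x x' => staggeredTime_le_add_one (e x'))
  · intro s hs
    have hn : 0 < n := Nat.pos_of_ne_zero fun h => by simp [h] at hs
    refine ⟨e.symm ⟨s % n, Nat.mod_lt s hn⟩, fun x hx => ?_⟩
    have hne : (e x : ℕ) ≠ s % n := fun h => hx (e.eq_symm_apply.2 (Fin.ext h))
    simp only [T, staggeredTime_succ_of_ne (e x).2 hne]

end DigitalHomotopy

theorem stronglyHomotopic_iff_punctuated_general {X Y : Type*} [Finite X]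
    (GX : SimpleGraph X) (GY : SimpleGraph Y)
    (f g : X → Y) :
    StronglyHomotopic GX GY f g ↔
      ∃ k H, IsHomotopy GX GY f g k H ∧ Punctuated k H := by
  refine ⟨StronglyHomotopic.exists_punctuated, ?_⟩
  rintro ⟨k, H, hH, hP⟩
  exact ⟨k, H, hH, hH.np2Cont_of_punctuated hP⟩

/-- for `X` finite, continuous maps `f, g : X → Y` are strongly
homotopic iff there is a punctuated homotopy from `f` to `g`. -/
theorem stronglyHomotopic_iff_punctuated {X Y : Type*} [Finite X]
    (GX : SimpleGraph X) (GY : SimpleGraph Y)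
    (f g : X → Y) (hf : DigCont GX GY f) (hg : DigCont GX GY g) :
    StronglyHomotopic GX GY f g ↔
      ∃ k H, IsHomotopy GX GY f g k H ∧ Punctuated k H :=
  stronglyHomotopic_iff_punctuated_general GX GY f g
end

section
/- There is no continuous map f : C₄ → C₄ whose image has cardinality strictly less than 4 and which is strongly homotopic in one step to the identity map of C₄. -/
/-- The digital cycle `C_n`: points indexed by `ZMod n`, with `i ⟷ j` iff
`j = i ± 1` and `i ≠ j`. -/
def digitalCycle (n : ℕ) : SimpleGraph (ZMod n) where
  Adj i j := i ≠ j ∧ (j = i + 1 ∨ i = j + 1)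
  symm := ⟨fun i j h => ⟨h.1.symm, h.2.symm⟩⟩
  loopless := ⟨fun i h => h.1 rfl⟩


/-
In `C_n` with `n ≥ 4` the points `x - 1` and `x + 1` are neither equal nor adjacent, so `x` is
the only point adjacent-or-equal to all of `x - 1`, `x`, `x + 1`. In a strong homotopy of length
one from `f` to the identity, `f x = H(x, 0)` must be adjacent-or-equal to `H(x', 1) = x'` for
each `x' ⟷= x`; hence `f x = x`, and the image of `f` is all of `C_n`.
-/

lemma SimpleGraph.adj_or_eq_comm {V : Type*} (G : SimpleGraph V) {u v : V} :
    G.Adj u v ∨ u = v ↔ G.Adj v u ∨ v = u := by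
  rw [G.adj_comm, eq_comm]

namespace digitalCycle

variable {n : ℕ}

lemma adj_or_eq_iff {i j : ZMod n} :
    (digitalCycle n).Adj i j ∨ i = j ↔ j = i - 1 ∨ j = i ∨ j = i + 1 := by
  constructor
  · rintro (⟨-, h | h⟩ | h)
    · exact .inr (.inr h)
    · exact .inl (by rw [h]; ring)
    · exact .inr (.inl h.symm)
  · rintro (h | h | h)
    · by_cases hij : i = j
      · exact .inr hij
      · exact .inl ⟨hij, .inr (by rw [h]; ring)⟩
    · exact .inr h.symm
    · by_cases hij : i = j
      · exact .inr hij
      · exact .inl ⟨hij, .inl h⟩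

lemma natCast_ne_zero {k : ℕ} (hk : 0 < k) (hkn : k < n) : (k : ZMod n) ≠ 0 := by
  rw [Ne, ZMod.natCast_eq_zero_iff]
  exact fun h => absurd (Nat.le_of_dvd hk h) (by omega)

lemma not_adj_or_eq_sub_one_add_one (hn : 4 ≤ n) (x : ZMod n) :
    ¬ ((digitalCycle n).Adj (x - 1) (x + 1) ∨ x - 1 = x + 1) := by
  have h1 := natCast_ne_zero (n := n) (k := 1) (by omega) (by omega)
  have h2 := natCast_ne_zero (n := n) (k := 2) (by omega) (by omega)
  have h3 := natCast_ne_zero (n := n) (k := 3) (by omega) (by omega)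
  push_cast at h1 h2 h3
  rw [adj_or_eq_iff]
  rintro (h | h | h)
  · exact h3 (by linear_combination h)
  · exact h2 (by linear_combination h)
  · exact h1 (by linear_combination h)

lemma eq_of_adj_or_eq_sub_one_self_add_one (hn : 4 ≤ n) {a x : ZMod n}
    (h : (digitalCycle n).Adj a x ∨ a = x)
    (hsub : (digitalCycle n).Adj a (x - 1) ∨ a = x - 1)
    (hadd : (digitalCycle n).Adj a (x + 1) ∨ a = x + 1) : a = x := by
  rcases adj_or_eq_iff.mp ((digitalCycle n).adj_or_eq_comm.mp h) with ha | ha | ha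
  · subst ha
    exact absurd hadd (not_adj_or_eq_sub_one_add_one hn x)
  · exact ha
  · subst ha
    exact absurd ((digitalCycle n).adj_or_eq_comm.mp hsub) (not_adj_or_eq_sub_one_add_one hn x)

lemma eq_id_of_isStrongHomotopy_id_one (hn : 4 ≤ n) {f : ZMod n → ZMod n}
    {H : ZMod n → ℕ → ZMod n}
    (hH : IsStrongHomotopy (digitalCycle n) (digitalCycle n) f id 1 H) : f = id := by
  obtain ⟨⟨h0, h1, -, -⟩, hcont⟩ := hH
  have hf : ∀ x x', (digitalCycle n).Adj x x' ∨ x = x' →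
      (digitalCycle n).Adj (f x) x' ∨ f x = x' := by
    intro x x' hxx'
    have := hcont x x' 0 1 hxx' (by omega) le_rfl (by omega) (by omega) (by simp)
    rwa [h0, h1] at this
  funext x
  exact eq_of_adj_or_eq_sub_one_self_add_one hn (hf x x (.inr rfl))
    (hf x (x - 1) (adj_or_eq_iff.mpr (.inl rfl)))
    (hf x (x + 1) (adj_or_eq_iff.mpr (.inr (.inr rfl))))

end digitalCycle

/-- Example `strongrigid`: no continuous selfmap of `C₄` whose
image has fewer than `4` points is strongly homotopic in one step to the
identity map of `C₄`. -/
theorem no_small_image_strongly_one_step_to_id :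
    ¬ ∃ f : ZMod 4 → ZMod 4, DigCont (digitalCycle 4) (digitalCycle 4) f ∧
      (Set.range f).ncard < 4 ∧
      (∃ H, IsStrongHomotopy (digitalCycle 4) (digitalCycle 4) f id 1 H) := by
  rintro ⟨f, -, hcard, H, hH⟩
  rw [digitalCycle.eq_id_of_isStrongHomotopy_id_one le_rfl hH, Set.range_id, Set.ncard_univ,
    Nat.card_zmod] at hcard
  exact lt_irrefl 4 hcard
end

section
/- Let n ≥ 4 and let f : C_n → C_n be a continuous map that is strongly homotopic to the identity map of C_n. Then f is equal to the identity map. -/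
/-!
A strong homotopy `H` ending at the identity can be unwound one stage at a time: if
`H(·, t+1) = id`, then by strong continuity `H(x, t)` is adjacent or equal to
`H(y, t+1) = y` for every `y` in the closed neighbourhood `N[x]`, so `N[x] ⊆ N[H(x, t)]`.
In `C_n` with `n ≥ 4` no vertex is dominated in this way by another one
(`N[x] = {x-1, x, x+1}` lies in no other closed neighbourhood), hence `H(x, t) = x`.
-/

/-- `a` dominates `x` when the closed neighbourhood of `x` lies in that of `a`. -/
def SimpleGraph.HasNoDominatedVertex {X : Type*} (G : SimpleGraph X) : Prop :=
  ∀ x a : X, (∀ y, G.Adj x y ∨ x = y → G.Adj a y ∨ a = y) → a = x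

section StrongHomotopy

variable {X : Type*} {G : SimpleGraph X} {k : ℕ} {H : X → ℕ → X}

theorem NP2Cont.stage_eq_id_of_succ (hG : G.HasNoDominatedVertex) (hH : NP2Cont G G k H)
    {t : ℕ} (ht : t < k) (hsucc : ∀ y, H y (t + 1) = y) (x : X) : H x t = x :=
  hG x (H x t) fun y hxy => hsucc y ▸
    hH x y t (t + 1) hxy ht.le ht (by omega) le_rfl (by simp)

theorem IsStrongHomotopy.eq_id (hG : G.HasNoDominatedVertex) {f : X → X}
    (hH : IsStrongHomotopy G G f id k H) : f = id := by
  obtain ⟨⟨hH0, hHk, -, -⟩, hNP⟩ := hH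
  have hstage : ∀ t ≤ k, ∀ x, H x t = x := fun t ht =>
    Nat.decreasingInduction (motive := fun t _ => ∀ x, H x t = x)
      (fun _ hlt hsucc => hNP.stage_eq_id_of_succ hG hlt hsucc) hHk ht
  funext x
  rw [← hH0 x, hstage 0 k.zero_le x, id]

end StrongHomotopy

theorem digitalCycle_adj_or_eq_iff {n : ℕ} {a b : ZMod n} :
    (digitalCycle n).Adj a b ∨ a = b ↔ b = a ∨ b = a + 1 ∨ a = b + 1 := by
  simp only [digitalCycle]
  tauto

theorem digitalCycle_hasNoDominatedVertex {n : ℕ} (hn : 4 ≤ n) :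
    (digitalCycle n).HasNoDominatedVertex := by
  have hne : ∀ m : ℕ, 0 < m → m < n → (m : ZMod n) ≠ 0 := fun m hm hmn =>
    (ZMod.natCast_eq_zero_iff m n).not.mpr (Nat.not_dvd_of_pos_of_lt hm hmn)
  have h1 := hne 1 (by omega) (by omega)
  have h2 := hne 2 (by omega) (by omega)
  have h3 := hne 3 (by omega) (by omega)
  push_cast at h1 h2 h3
  intro x a hdom
  have hx := hdom x (Or.inr rfl)
  have hpred := hdom (x - 1)
    (digitalCycle_adj_or_eq_iff.mpr (.inr (.inr (sub_add_cancel x 1).symm)))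
  have hsucc := hdom (x + 1) (digitalCycle_adj_or_eq_iff.mpr (.inr (.inl rfl)))
  simp only [digitalCycle_adj_or_eq_iff] at hx hpred hsucc
  -- `a = x ± 1` would make one of `1, 2, 3` vanish in `ZMod n`
  grind

theorem eq_id_of_stronglyHomotopic_id_general (n : ℕ) (hn : 4 ≤ n)
    (f : ZMod n → ZMod n)
    (h : StronglyHomotopic (digitalCycle n) (digitalCycle n) f id) :
    f = id := by
  obtain ⟨k, H, hH⟩ := h
  exact hH.eq_id (digitalCycle_hasNoDominatedVertex hn)

/-- for `n ≥ 4`, any continuous selfmap of the digital cycle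
`C_n` which is strongly homotopic to the identity map equals the identity map. -/
theorem eq_id_of_stronglyHomotopic_id (n : ℕ) (hn : 4 ≤ n)
    (f : ZMod n → ZMod n) (hf : DigCont (digitalCycle n) (digitalCycle n) f)
    (h : StronglyHomotopic (digitalCycle n) (digitalCycle n) f id) :
    f = id :=
  eq_id_of_stronglyHomotopic_id_general n hn f h
end

section
/- Let X = ℤ × {0,1} with 8-adjacency (i.e., (a,b) ⟷ (a',b') iff |a−a'| ≤ 1, |b−b'| ≤ 1, and (a,b) ≠ (a',b')), and let f : X → X be given by f(a,b) = (a,0). Then f is continuous, f is strongly homotopic in one step to the identity map of X, but there is no punctuated homotopy (of any length) from f to the identity map of X. -/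
/-- `ℤ × {0,1}` with 8-adjacency: `(a,b) ⟷ (a',b')` iff `|a−a'| ≤ 1`,
`|b−b'| ≤ 1` and `(a,b) ≠ (a',b')`. -/
def strip8 : SimpleGraph (ℤ × Fin 2) where
  Adj p q := p ≠ q ∧ |p.1 - q.1| ≤ 1 ∧ |(p.2 : ℤ) - (q.2 : ℤ)| ≤ 1
  symm := ⟨fun p q h => ⟨h.1.symm, by rw [abs_sub_comm]; exact h.2.1,
    by rw [abs_sub_comm]; exact h.2.2⟩⟩
  loopless := ⟨fun p h => h.1 rfl⟩

section DigitalHomotopy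

variable {X Y : Type*}

theorem Punctuated.of_succ {k : ℕ} {H : X → ℕ → Y} (h : Punctuated (k + 1) H) :
    Punctuated k H :=
  fun t ht => h t (Nat.lt_succ_of_lt ht)

theorem Punctuated.finite_setOf_ne {k : ℕ} {H : X → ℕ → Y} (h : Punctuated k H) :
    {x | H x 0 ≠ H x k}.Finite := by
  induction k with
  | zero => simp
  | succ k ih =>
    obtain ⟨x₀, hx₀⟩ := h k k.lt_succ_self
    refine ((ih h.of_succ).insert x₀).subset fun x hx => ?_
    by_cases hx₀x : x = x₀
    · exact Or.inl hx₀x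
    · exact Or.inr fun hk => hx (hk.trans (hx₀ x hx₀x))

theorem IsHomotopy.finite_setOf_ne_of_punctuated {GX : SimpleGraph X} {GY : SimpleGraph Y}
    {f g : X → Y} {k : ℕ} {H : X → ℕ → Y} (hH : IsHomotopy GX GY f g k H)
    (hp : Punctuated k H) : {x | f x ≠ g x}.Finite := by
  simpa only [hH.1, hH.2.1] using hp.finite_setOf_ne

theorem isStrongHomotopy_of_np2Cont {GX : SimpleGraph X} {GY : SimpleGraph Y}
    {f g : X → Y} {k : ℕ} {H : X → ℕ → Y} (h0 : ∀ x, H x 0 = f x) (hk : ∀ x, H x k = g x)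
    (hH : NP2Cont GX GY k H) : IsStrongHomotopy GX GY f g k H := by
  refine ⟨⟨h0, hk, fun t ht x x' hx => ?_, fun x t ht => ?_⟩, hH⟩
  · exact hH x x' t t (Or.inl hx) ht ht (by omega) (by omega)
      fun h => hx.ne (Prod.mk.inj h).1
  · exact hH x x t (t + 1) (Or.inr rfl) ht.le ht (by omega) (by omega) (by simp)

end DigitalHomotopy

theorem strip8_adj_or_eq_iff {p q : ℤ × Fin 2} : strip8.Adj p q ∨ p = q ↔ |p.1 - q.1| ≤ 1 := by
  constructor
  · rintro (h | rfl)
    · exact h.2.1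
    · simp
  · intro h
    by_cases hpq : p = q
    · exact Or.inr hpq
    · refine Or.inl ⟨hpq, h, ?_⟩
      have := p.2.isLt
      have := q.2.isLt
      rw [abs_le]
      omega

theorem strip8_digCont_of_fst {φ : ℤ × Fin 2 → ℤ × Fin 2} (hφ : ∀ p, (φ p).1 = p.1) :
    DigCont strip8 strip8 φ := fun p q hpq => by
  rw [strip8_adj_or_eq_iff, hφ, hφ]
  exact hpq.2.1

theorem strip8_np2Cont_of_fst {k : ℕ} {H : ℤ × Fin 2 → ℕ → ℤ × Fin 2}
    (hH : ∀ p t, (H p t).1 = p.1) : NP2Cont strip8 strip8 k H := by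
  intro p q t t' hpq _ _ _ _ _
  rw [strip8_adj_or_eq_iff, hH, hH, ← strip8_adj_or_eq_iff]
  exact hpq

theorem infinite_setOf_strip8_ne_collapse :
    {p : ℤ × Fin 2 | (p.1, (0 : Fin 2)) ≠ id p}.Infinite :=
  Set.infinite_of_injective_forall_mem (f := fun a : ℤ => (a, (1 : Fin 2)))
    (fun a b h => (Prod.mk.inj h).1) (by simp)

/-- on `X = ℤ × {0,1}` with 8-adjacency, the map
`f(a,b) = (a,0)` is continuous and strongly homotopic in one step to the
identity, but there is no punctuated homotopy from `f` to the identity. -/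
theorem strip8_no_punctuated :
    DigCont strip8 strip8 (fun p : ℤ × Fin 2 => (p.1, (0 : Fin 2))) ∧
    (∃ H, IsStrongHomotopy strip8 strip8
      (fun p : ℤ × Fin 2 => (p.1, (0 : Fin 2))) id 1 H) ∧
    ¬ ∃ k H, IsHomotopy strip8 strip8
      (fun p : ℤ × Fin 2 => (p.1, (0 : Fin 2))) id k H ∧ Punctuated k H := by
  refine ⟨strip8_digCont_of_fst fun _ => rfl, ?_, ?_⟩
  · refine ⟨fun p t => if t = 0 then (p.1, 0) else p,
      isStrongHomotopy_of_np2Cont (fun _ => rfl) (fun _ => rfl) ?_⟩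
    exact strip8_np2Cont_of_fst fun p t => by split_ifs <;> rfl
  · rintro ⟨k, H, hH, hp⟩
    exact infinite_setOf_strip8_ne_collapse (hH.finite_setOf_ne_of_punctuated hp)
end
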